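/- Let D be an invertible diagonal 2r×2r matrix with diagonal entries x_1,...,x_r,1/x_r,...,1/x_1 and let A_r = J_{2r} - P_r be as above. Then the characteristic polynomial of B = D·A_r equals (z^2 - 2y z + (2r-1))·(z-1)^{r-1}(z+1)^{r-1}, where y = (1/2)·Σ_{j=1}^r (x_j + 1/x_j). -/

import Mathlib

open Polynomial

/-- The all-ones `2r × 2r` matrix `J`. -/
def Jmat (r : ℕ) : Matrix (Fin (2 * r)) (Fin (2 * r)) ℝ :=
  Matrix.of fun _ _ => 1

/-- The anti-diagonal permutation matrix `P`, with `(P)_{ij} = 1` iff `i + j = 2r + 1`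
(in 1-based indexing). -/
def Pmat (r : ℕ) : Matrix (Fin (2 * r)) (Fin (2 * r)) ℝ :=
  Matrix.of fun i j => if (i : ℕ) + (j : ℕ) + 2 = 2 * r + 1 then 1 else 0

/-- The diagonal matrix with diagonal entries `x_1, …, x_r, 1/x_r, …, 1/x_1`. -/
noncomputable def Dmat (r : ℕ) (x : Fin r → ℝ) : Matrix (Fin (2 * r)) (Fin (2 * r)) ℝ :=
  Matrix.diagonal fun i =>
    if h : (i : ℕ) < r then x ⟨i, h⟩
    else (x ⟨2 * r - 1 - (i : ℕ), by have := i.isLt; omega⟩)⁻¹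

namespace CPDA

noncomputable def d (r : ℕ) (x : Fin r → ℝ) : Fin (2 * r) → ℝ := fun i =>
    if h : (i : ℕ) < r then x ⟨i, h⟩
    else (x ⟨2 * r - 1 - (i : ℕ), by have := i.isLt; omega⟩)⁻¹

lemma Dmat_eq (r : ℕ) (x : Fin r → ℝ) : Dmat r x = Matrix.diagonal (d r x) := rfl

def sig (r : ℕ) (i : Fin (2 * r)) : Fin (2 * r) := ⟨2 * r - 1 - (i : ℕ), by have := i.isLt; omega⟩

lemma sig_sig (r : ℕ) (i : Fin (2 * r)) : sig r (sig r i) = i := by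
  have := i.isLt; ext; simp [sig]; omega

lemma eq_sig_iff (r : ℕ) (i j : Fin (2 * r)) :
    j = sig r i ↔ (i : ℕ) + (j : ℕ) + 2 = 2 * r + 1 := by
  have hi := i.isLt; have hj := j.isLt
  constructor
  · rintro rfl; simp [sig]; omega
  · intro h; ext; simp [sig]; omega

lemma Pmat_eq (r : ℕ) : Pmat r = Matrix.of fun i j => if j = sig r i then (1:ℝ) else 0 := by
  ext i j
  simp [Pmat, eq_sig_iff]

lemma d_sig (r : ℕ) (x : Fin r → ℝ) (i : Fin (2 * r)) : d r x (sig r i) = (d r x i)⁻¹ := by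
  have hi := i.isLt
  rcases lt_or_ge (i : ℕ) r with h | h
  · have h2 : ¬ ((sig r i : ℕ) < r) := by simp [sig]; omega
    rw [d, d]; rw [dif_neg h2, dif_pos h]
    congr 2
    · ext; simp [sig]; omega
  · have h2 : (sig r i : ℕ) < r := by simp [sig]; omega
    rw [d, d]; rw [dif_pos h2, dif_neg (by omega)]
    rw [inv_inv]
    congr 1

lemma d_ne (r : ℕ) (x : Fin r → ℝ) (hx : ∀ j, x j ≠ 0) (i : Fin (2 * r)) : d r x i ≠ 0 := by
  rw [d]; split
  · exact hx _
  · exact inv_ne_zero (hx _)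

lemma P_mul (r : ℕ) (M : Matrix (Fin (2*r)) (Fin (2*r)) ℝ) :
    Pmat r * M = Matrix.of fun i j => M (sig r i) j := by
  ext i j
  rw [Matrix.mul_apply, Pmat_eq]
  simp [ite_mul]

lemma mul_P (r : ℕ) (M : Matrix (Fin (2*r)) (Fin (2*r)) ℝ) :
    M * Pmat r = Matrix.of fun i j => M i (sig r j) := by
  ext i j
  rw [Matrix.mul_apply, Pmat_eq]
  have : ∀ k : Fin (2*r), (j = sig r k) ↔ (k = sig r j) := by
    intro k; constructor <;> (rintro rfl; rw [sig_sig])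
  simp only [Matrix.of_apply, this, mul_ite, mul_one, mul_zero]
  simp

lemma P_mul_P (r : ℕ) : Pmat r * Pmat r = 1 := by
  rw [P_mul, Pmat_eq]
  ext i j
  have : ∀ k : Fin (2*r), (j = sig r k) ↔ (k = sig r j) := by
    intro k; constructor <;> (rintro rfl; rw [sig_sig])
  simp [this, sig_sig, Matrix.one_apply, eq_comm]


def lo (r : ℕ) (j : Fin r) : Fin (2*r) := ⟨j, by have := j.isLt; omega⟩
def hi (r : ℕ) (j : Fin r) : Fin (2*r) := ⟨2*r-1-(j:ℕ), by have := j.isLt; omega⟩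

lemma d_lo (r : ℕ) (x : Fin r → ℝ) (j : Fin r) : d r x (lo r j) = x j :=
  dif_pos j.isLt

lemma d_hi (r : ℕ) (x : Fin r → ℝ) (j : Fin r) : d r x (hi r j) = (x j)⁻¹ := by
  have := j.isLt
  rw [d, dif_neg (by simp [hi]; omega)]
  congr 2
  ext; simp [hi]; omega

lemma sig_lo (r : ℕ) (j : Fin r) : sig r (lo r j) = hi r j := rfl

def eFun (r : ℕ) : Fin 2 × Fin r → Fin (2*r) :=
  fun p => if p.1 = 0 then lo r p.2 else hi r p.2

lemma eFun_zero (r : ℕ) (j : Fin r) : eFun r (0, j) = lo r j := rfl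
lemma eFun_one (r : ℕ) (j : Fin r) : eFun r (1, j) = hi r j := rfl

lemma eFun_inj (r : ℕ) : Function.Injective (eFun r) := by
  rintro ⟨s, j⟩ ⟨t, k⟩ h
  have hj := j.isLt; have hk := k.isLt
  have hs' : s = 0 ∨ s = 1 := by omega
  have ht' : t = 0 ∨ t = 1 := by omega
  have h' := congrArg Fin.val h
  rcases hs' with rfl | rfl <;> rcases ht' with rfl | rfl <;>
      simp only [eFun_zero, eFun_one, lo, hi] at h'
  · have h3 : j = k := by ext; exact h'
    exact Prod.ext rfl h3
  · omega
  · omega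
  · rw [eFun_one r j, eFun_one r k] at h
    have h2 : 2*r-1-(j:ℕ) = 2*r-1-(k:ℕ) := congrArg Fin.val h
    have h3 : j = k := by ext; omega
    exact Prod.ext rfl h3

noncomputable def e (r : ℕ) : Fin 2 × Fin r ≃ Fin (2*r) := by
  refine Equiv.ofBijective (eFun r) ?_
  rw [Fintype.bijective_iff_injective_and_card]
  refine ⟨eFun_inj r, by simp⟩

lemma e_zero (r : ℕ) (j : Fin r) : e r (0, j) = lo r j := rfl
lemma e_one (r : ℕ) (j : Fin r) : e r (1, j) = hi r j := rfl

lemma prod_d (r : ℕ) (x : Fin r → ℝ) (hx : ∀ j, x j ≠ 0) : ∏ i, d r x i = 1 := by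
  rw [← Equiv.prod_comp (e r) (d r x), Fintype.prod_prod_type]
  rw [Fin.prod_univ_two]
  simp only [e_zero, e_one, d_lo, d_hi]
  rw [← Finset.prod_mul_distrib]
  simp [mul_inv_cancel₀, hx]

lemma sum_d (r : ℕ) (x : Fin r → ℝ) : ∑ i, d r x i = ∑ j, (x j + (x j)⁻¹) := by
  rw [← Equiv.sum_comp (e r) (d r x), Fintype.sum_prod_type]
  rw [Fin.sum_univ_two]
  simp only [e_zero, e_one, d_lo, d_hi]
  rw [← Finset.sum_add_distrib]


noncomputable def Emat (r : ℕ) (x : Fin r → ℝ) : Matrix (Fin (2*r)) (Fin (2*r)) ℝ :=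
  Matrix.diagonal fun i => (d r x i)⁻¹

lemma E_mul_D (r : ℕ) (x : Fin r → ℝ) (hx : ∀ j, x j ≠ 0) :
    Emat r x * Dmat r x = 1 := by
  rw [Emat, Dmat_eq, Matrix.diagonal_mul_diagonal]
  have : (fun i => (d r x i)⁻¹ * d r x i) = fun _ => (1:ℝ) := by
    funext i; exact inv_mul_cancel₀ (d_ne r x hx i)
  rw [this, Matrix.diagonal_one]

lemma D_mul_E (r : ℕ) (x : Fin r → ℝ) (hx : ∀ j, x j ≠ 0) :
    Dmat r x * Emat r x = 1 := by
  rw [Emat, Dmat_eq, Matrix.diagonal_mul_diagonal]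
  have : (fun i => d r x i * (d r x i)⁻¹) = fun _ => (1:ℝ) := by
    funext i; exact mul_inv_cancel₀ (d_ne r x hx i)
  rw [this, Matrix.diagonal_one]

lemma EP_eq_PD (r : ℕ) (x : Fin r → ℝ) :
    Emat r x * Pmat r = Pmat r * Dmat r x := by
  ext i j
  rw [Emat, Dmat_eq, Matrix.diagonal_mul, Matrix.mul_diagonal, Pmat_eq]
  simp only [Matrix.of_apply]
  split_ifs with h
  · subst h; rw [d_sig, mul_one, one_mul]
  · rw [mul_zero, zero_mul]

noncomputable def Kmat (r : ℕ) (x : Fin r → ℝ) (z : ℝ) : Matrix (Fin (2*r)) (Fin (2*r)) ℝ :=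
  z • Emat r x + Pmat r

noncomputable def Lmat (r : ℕ) (x : Fin r → ℝ) (z : ℝ) : Matrix (Fin (2*r)) (Fin (2*r)) ℝ :=
  z • Dmat r x - Pmat r

lemma K_mul_L (r : ℕ) (x : Fin r → ℝ) (hx : ∀ j, x j ≠ 0) (z : ℝ) :
    Kmat r x z * Lmat r x z = (z^2 - 1) • 1 := by
  rw [Kmat, Lmat, add_mul, mul_sub, mul_sub, Matrix.smul_mul, Matrix.smul_mul,
    Matrix.mul_smul, Matrix.mul_smul, E_mul_D r x hx, EP_eq_PD, P_mul_P]
  rw [sub_add_sub_cancel, smul_smul, sub_smul, one_smul, pow_two]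

lemma K_inv (r : ℕ) (x : Fin r → ℝ) (hx : ∀ j, x j ≠ 0) (z : ℝ) (hz : z^2 - 1 ≠ 0) :
    (Kmat r x z)⁻¹ = (z^2-1)⁻¹ • Lmat r x z := by
  apply Matrix.inv_eq_right_inv
  rw [Matrix.mul_smul, K_mul_L r x hx, smul_smul, inv_mul_cancel₀ hz, one_smul]

lemma K_submatrix (r : ℕ) (x : Fin r → ℝ) (z : ℝ) :
    (Kmat r x z).submatrix (e r) (e r) =
      Matrix.blockDiagonal (fun j : Fin r => !![z * (x j)⁻¹, 1; 1, z * x j]) := by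
  ext ⟨s, j⟩ ⟨t, k⟩
  rw [Matrix.submatrix_apply, Matrix.blockDiagonal_apply, Kmat, Pmat_eq]
  have hs' : s = 0 ∨ s = 1 := by have := s.isLt; omega
  have ht' : t = 0 ∨ t = 1 := by have := t.isLt; omega
  have hlo : ∀ a b : Fin r, (lo r a = lo r b) ↔ a = b := by
    intro a b; constructor
    · intro h; ext; exact congrArg (fun t : Fin (2*r) => t.val) h
    · rintro rfl; rfl
  have hhi : ∀ a b : Fin r, (hi r a = hi r b) ↔ a = b := by
    intro a b; have := a.isLt; have := b.isLt
    constructor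
    · intro h; have := congrArg (fun t : Fin (2*r) => t.val) h
      simp only [hi] at this; ext; omega
    · rintro rfl; rfl
  have hlohi : ∀ a b : Fin r, ¬ (lo r a = hi r b) := by
    intro a b h; have := a.isLt; have := b.isLt
    have := congrArg (fun t : Fin (2*r) => t.val) h; simp only [lo, hi] at this; omega
  have hhilo : ∀ a b : Fin r, ¬ (hi r a = lo r b) := by
    intro a b h; exact hlohi b a h.symm
  have hsiglo : ∀ a : Fin r, sig r (lo r a) = hi r a := fun a => rfl
  have hsighi : ∀ a : Fin r, sig r (hi r a) = lo r a := by
    intro a; rw [← hsiglo, sig_sig]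
  rcases hs' with rfl | rfl <;> rcases ht' with rfl | rfl <;>
      by_cases hjk : j = k <;>
    simp [e_zero, e_one, Matrix.add_apply, Matrix.smul_apply, Emat,
      Matrix.diagonal_apply, d_lo, d_hi, hsiglo, hsighi, hlo, hhi, hlohi, hhilo,
      hjk, Matrix.one_apply, smul_eq_mul, Matrix.of_apply] <;>
    exact fun h => hjk h.symm


lemma det_K (r : ℕ) (x : Fin r → ℝ) (hx : ∀ j, x j ≠ 0) (z : ℝ) :
    (Kmat r x z).det = (z^2-1)^r := by
  rw [← Matrix.det_submatrix_equiv_self (e r), K_submatrix, Matrix.det_blockDiagonal]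
  have h : ∀ j : Fin r, (!![z * (x j)⁻¹, 1; 1, z * x j]).det = z^2 - 1 := by
    intro j
    rw [Matrix.det_fin_two_of]
    have := hx j
    field_simp
  rw [Finset.prod_congr rfl (fun j _ => h j), Finset.prod_const, Finset.card_univ,
    Fintype.card_fin]

lemma det_D (r : ℕ) (x : Fin r → ℝ) (hx : ∀ j, x j ≠ 0) : (Dmat r x).det = 1 := by
  rw [Dmat_eq, Matrix.det_diagonal, prod_d r x hx]

lemma sum_L (r : ℕ) (x : Fin r → ℝ) (z : ℝ) :
    ∑ i, ∑ j, Lmat r x z i j = z * (∑ j, (x j + (x j)⁻¹)) - 2*r := by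
  have h1 : ∀ i, ∑ j, Dmat r x i j = d r x i := by
    intro i; rw [Dmat_eq]
    simp [Matrix.diagonal_apply]
  have h2 : ∀ i, ∑ j, Pmat r i j = 1 := by
    intro i; rw [Pmat_eq]
    simp
  have : ∀ i, ∑ j, Lmat r x z i j = z * d r x i - 1 := by
    intro i
    simp only [Lmat, Matrix.sub_apply, Matrix.smul_apply, smul_eq_mul,
      Finset.sum_sub_distrib, ← Finset.mul_sum, h1 i, h2 i]
  rw [Finset.sum_congr rfl (fun i _ => this i), Finset.sum_sub_distrib,
    ← Finset.mul_sum, sum_d, Finset.sum_const, Finset.card_univ, Fintype.card_fin]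
  ring

lemma det_step (r : ℕ) (hr : 1 ≤ r) (x : Fin r → ℝ) (hx : ∀ j, x j ≠ 0) (z : ℝ)
    (hz : z^2 - 1 ≠ 0) :
    (z • (1 : Matrix (Fin (2*r)) (Fin (2*r)) ℝ) - Dmat r x * (Jmat r - Pmat r)).det
      = (z^2 - (∑ j, (x j + (x j)⁻¹)) * z + (2*(r:ℝ) - 1)) * (z^2-1)^(r-1) := by
  have hfac : z • (1 : Matrix (Fin (2*r)) (Fin (2*r)) ℝ) - Dmat r x * (Jmat r - Pmat r)
      = Dmat r x * (Kmat r x z - Jmat r) := by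
    rw [Kmat, mul_sub, mul_sub, mul_add, Matrix.mul_smul, D_mul_E r x hx]
    set a := z • (1 : Matrix (Fin (2*r)) (Fin (2*r)) ℝ)
    set b := Dmat r x * Jmat r
    set c := Dmat r x * Pmat r
    abel
  have hJ : Matrix.replicateCol Unit (fun _ => (-1:ℝ)) * Matrix.replicateRow Unit (fun _ => (1:ℝ))
      = -(Jmat r) := by
    ext i j
    rw [Matrix.mul_apply]
    simp [Jmat]
  have hKJ : Kmat r x z - Jmat r
      = Kmat r x z + Matrix.replicateCol Unit (fun _ => (-1:ℝ)) * Matrix.replicateRow Unit (fun _ => (1:ℝ)) := by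
    rw [hJ, ← sub_eq_add_neg]
  have hdetK := det_K r x hx z
  have hKunit : IsUnit (Kmat r x z).det := by
    rw [hdetK]; exact (pow_ne_zero r hz).isUnit
  rw [hfac, Matrix.det_mul, det_D r x hx, one_mul, hKJ,
    Matrix.det_add_replicateCol_mul_replicateRow hKunit, hdetK, Matrix.det_unique]
  have hinv := K_inv r x hx z hz
  have hs : ∑ jj, ∑ ii, Lmat r x z ii jj = z * (∑ j, (x j + (x j)⁻¹)) - 2*(r:ℝ) := by
    rw [Finset.sum_comm]; exact sum_L r x z
  have hentry : ((Matrix.replicateRow Unit (fun _ : Fin (2*r) => (1:ℝ)) * (Kmat r x z)⁻¹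
      * Matrix.replicateCol Unit (fun _ : Fin (2*r) => (-1:ℝ))) : Matrix Unit Unit ℝ) default default
      = -((z^2-1)⁻¹ * (z * (∑ j, (x j + (x j)⁻¹)) - 2*(r:ℝ))) := by
    rw [hinv, Matrix.mul_apply]
    simp only [Matrix.mul_apply, Matrix.replicateRow_apply, Matrix.replicateCol_apply, Matrix.smul_apply,
      smul_eq_mul, one_mul, mul_neg, mul_one]
    rw [← hs, Finset.mul_sum, ← Finset.sum_neg_distrib]
    exact Finset.sum_congr rfl fun jj _ => by rw [Finset.mul_sum]
  rw [Matrix.add_apply, Matrix.one_apply_eq, hentry]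
  have hr1 : (z^2-1)^r = (z^2-1)^(r-1) * (z^2-1) := by
    conv_lhs => rw [show r = (r-1) + 1 by omega]
    rw [pow_succ]
  rw [hr1]
  field_simp
  ring


lemma eval_charpoly {n : Type*} [DecidableEq n] [Fintype n] (M : Matrix n n ℝ) (w : ℝ) :
    M.charpoly.eval w = (w • (1 : Matrix n n ℝ) - M).det := by
  rw [Matrix.charpoly, ← Polynomial.coe_evalRingHom, RingHom.map_det]
  congr 1
  ext i j
  by_cases h : i = j
  · subst h
    simp [Matrix.charmatrix_apply_eq, Matrix.sub_apply, Matrix.smul_apply,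
      Matrix.one_apply_eq]
  · simp [Matrix.charmatrix_apply_ne _ _ _ h, Matrix.sub_apply, Matrix.smul_apply,
      Matrix.one_apply_ne h, h]

end CPDA

/-- The characteristic polynomial of `B = D · A_r` equals
`(z² - 2yz + (2r-1)) (z-1)^{r-1} (z+1)^{r-1}`, where `y = (1/2)∑ (x_j + 1/x_j)`. -/
theorem charpoly_DA (r : ℕ) (hr : 1 ≤ r) (x : Fin r → ℝ) (hx : ∀ j, x j ≠ 0) :
    (Dmat r x * (Jmat r - Pmat r)).charpoly =
      (X ^ 2 - C (2 * ((1 : ℝ) / 2 * ∑ j, (x j + (x j)⁻¹))) * X + C (2 * (r : ℝ) - 1)) *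
        (X - 1) ^ (r - 1) * (X + 1) ^ (r - 1) := by
  apply Polynomial.eq_of_infinite_eval_eq
  apply Set.Infinite.mono (s := Set.Ioi (1:ℝ)) ?_ (Set.Ioi_infinite 1)
  intro z hz
  have hz1 : (1:ℝ) < z := hz
  have hz2 : z^2 - 1 ≠ 0 := by nlinarith
  show _ = _
  rw [CPDA.eval_charpoly, CPDA.det_step r hr x hx z hz2]
  simp only [eval_mul, eval_pow, eval_add, eval_sub, eval_one, eval_C, eval_X]
  rw [mul_assoc, ← mul_pow]
  have h3 : (z-1)*(z+1) = z^2-1 := by ring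
  rw [h3]
  ring
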